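/- arXiv:math-ph/0004007 — 2 statements merged into one kernel-verified Lean document; each statement's English description precedes it below -/
import Mathlib

section
/- Let E be a finite-dimensional real normed vector space, X : E → E a continuous vector field, and Φ : ℝ × E → E a flow satisfying Φ(0,z)=z, Φ(t+s,z)=Φ(t,Φ(s,z)), and ∂ₜΦ(t,z)=X(Φ(t,z)) for all t,s,z. Let H₁ : E → M₂(ℂ) be continuous with H₁(z) Hermitian, and let d : E × ℝ → M₂(ℂ) satisfy d(z,0)=1, ∂ₜd(z,t) = -i·H₁(Φ(t,z))·d(z,t), and the cocycle property d(z,t+s) = d(Φ(t,z),s)·d(z,t). Let B₀ : E → M₂(ℂ) be continuously differentiable, and define B(t,z) := d(z,t)*·B₀(Φ(t,z))·d(z,t). Assume that for each t the map z ↦ B(t,z) is differentiable. Then B solves the matrix transport equation ∂ₜB(t,z) = (D_z B(t,·))(z)[X(z)] + i·[H₁(z), B(t,z)] for all t and z, where D_z denotes the Fréchet derivative in z and [X,Y] := XY − YX. -/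
/-!
The cocycle property of `d` and the group property of `Φ` give
`B (s + t) z = (d z s)ᴴ * B t (Φ s z) * d z s`, so the time derivative of `B` at `t` is the
derivative at `s = 0` of the right-hand side. There the product rule applies with `Φ 0 z = z`,
`d z 0 = 1` and `∂ₛ d z 0 = -i H₁ z`, whose adjoint is `i H₁ z` because `H₁ z` is Hermitian.
-/

attribute [local instance] Matrix.normedAddCommGroup Matrix.normedSpace

open Matrix

namespace Matrix

variable {m n p 𝕂 : Type*} [Fintype m] [Fintype n] [Fintype p] [RCLike 𝕂]

noncomputable def mulCLM : Matrix m n 𝕂 →L[ℝ] Matrix n p 𝕂 →L[ℝ] Matrix m p 𝕂 :=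
  (LinearMap.mk₂ ℝ (· * ·) Matrix.add_mul (fun _ _ _ => Matrix.smul_mul _ _ _)
    Matrix.mul_add (fun _ _ _ => Matrix.mul_smul _ _ _)).toContinuousBilinearMap

theorem hasDerivAt_mul {f : ℝ → Matrix m n 𝕂} {g : ℝ → Matrix n p 𝕂} {f' : Matrix m n 𝕂}
    {g' : Matrix n p 𝕂} {t : ℝ} (hf : HasDerivAt f f' t) (hg : HasDerivAt g g' t) :
    HasDerivAt (fun s => f s * g s) (f' * g t + f t * g') t := by
  rw [add_comm]
  exact mulCLM.hasDerivAt_of_bilinear (fun _ => hf) (fun _ => hg)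

end Matrix

theorem HasDerivAt.of_comp_add_const {𝕜 F : Type*} [NontriviallyNormedField 𝕜]
    [NormedAddCommGroup F] [NormedSpace 𝕜 F] {f : 𝕜 → F} {f' : F} {t : 𝕜}
    (h : HasDerivAt (fun s => f (s + t)) f' 0) : HasDerivAt f f' t := by
  have h' := (sub_self t ▸ h).comp_sub_const t t
  simp only [sub_add_cancel] at h'
  exact h'

theorem hasDerivAt_conjTranspose_mul_comp_mul_zero {E n : Type*} [NormedAddCommGroup E]
    [NormedSpace ℝ E] [Fintype n] [DecidableEq n] {γ : ℝ → E} {z v : E} {U : ℝ → Matrix n n ℂ}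
    {H : Matrix n n ℂ} {C : E → Matrix n n ℂ} {C' : E →L[ℝ] Matrix n n ℂ}
    (hγ0 : γ 0 = z) (hγ : HasDerivAt γ v 0) (hU0 : U 0 = 1)
    (hU : HasDerivAt U ((-Complex.I) • H) 0) (hH : Hᴴ = H) (hC : HasFDerivAt C C' z) :
    HasDerivAt (fun s => (U s)ᴴ * C (γ s) * U s)
      (C' v + Complex.I • (H * C z - C z * H)) 0 := by
  have hUstar : HasDerivAt (fun s => (U s)ᴴ) (Complex.I • H) 0 := by
    have h := hU.star
    rwa [star_smul, star_neg, Complex.star_def, Complex.conj_I, neg_neg, star_eq_conjTranspose,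
      hH] at h
  have hCγ : HasDerivAt (fun s => C (γ s)) (C' v) 0 := by
    rw [← hγ0] at hC
    exact hC.comp_hasDerivAt 0 hγ
  convert hasDerivAt_mul (hasDerivAt_mul hUstar hCγ) hU using 1
  simp only [hU0, hγ0, conjTranspose_one, one_mul, mul_one, smul_mul_assoc, mul_smul_comm,
    mul_neg, neg_smul, smul_sub]
  abel

theorem egorov_transport_equation_general
    {E : Type*} [NormedAddCommGroup E] [NormedSpace ℝ E]
    (X : E → E)
    (Φ : ℝ → E → E)
    (hΦ0 : ∀ z, Φ 0 z = z)
    (hΦgrp : ∀ t s z, Φ (t + s) z = Φ t (Φ s z))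
    (hΦder : ∀ t z, HasDerivAt (fun τ => Φ τ z) (X (Φ t z)) t)
    (H₁ : E → Matrix (Fin 2) (Fin 2) ℂ)
    (hH₁herm : ∀ z, (H₁ z)ᴴ = H₁ z)
    (d : E → ℝ → Matrix (Fin 2) (Fin 2) ℂ)
    (hd0 : ∀ z, d z 0 = 1)
    (hdder : ∀ z t, HasDerivAt (d z) ((-Complex.I) • (H₁ (Φ t z) * d z t)) t)
    (hcocycle : ∀ z t s, d z (t + s) = d (Φ t z) s * d z t)
    (B₀ : E → Matrix (Fin 2) (Fin 2) ℂ)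
    (B : ℝ → E → Matrix (Fin 2) (Fin 2) ℂ)
    (hB : ∀ t z, B t z = (d z t)ᴴ * B₀ (Φ t z) * d z t)
    (hBdiff : ∀ t, Differentiable ℝ (B t)) :
    ∀ t z, HasDerivAt (fun τ => B τ z)
      (fderiv ℝ (B t) z (X z) + Complex.I • (H₁ z * B t z - B t z * H₁ z)) t := by
  intro t z
  have hshift : ∀ s, B (s + t) z = (d z s)ᴴ * B t (Φ s z) * d z s := fun s => by
    rw [hB, hB, hcocycle, add_comm s t, hΦgrp, conjTranspose_mul]
    noncomm_ring
  have hΦ' : HasDerivAt (fun s => Φ s z) (X z) 0 := by simpa only [hΦ0] using hΦder 0 z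
  have hd' : HasDerivAt (d z) ((-Complex.I) • H₁ z) 0 := by
    simpa only [hΦ0, hd0, mul_one] using hdder z 0
  have hgen : HasDerivAt (fun s => B (s + t) z)
      (fderiv ℝ (B t) z (X z) + Complex.I • (H₁ z * B t z - B t z * H₁ z)) 0 := by
    simpa only [hshift] using hasDerivAt_conjTranspose_mul_comp_mul_zero (hΦ0 z) hΦ' (hd0 z) hd'
      (hH₁herm z) (hBdiff t z).hasFDerivAt
  exact hgen.of_comp_add_const

/-- **Leading-order Egorov property / matrix transport equation.**
Let `X` be a continuous vector field on a finite-dimensional real normed space `E`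
with flow `Φ`, let `H₁ : E → M₂(ℂ)` be continuous Hermitian, and let `d` be the spin
transport matrix along the flow (with cocycle property).  If `B₀ : E → M₂(ℂ)` is `C¹`
and `B t z := (d z t)ᴴ * B₀ (Φ t z) * d z t` is differentiable in `z` for each `t`,
then `B` solves `∂ₜ B(t,z) = (D_z B(t,·))(z)[X z] + i [H₁ z, B(t,z)]`. -/
theorem egorov_transport_equation
    {E : Type*} [NormedAddCommGroup E] [NormedSpace ℝ E] [FiniteDimensional ℝ E]
    (X : E → E) (hX : Continuous X)
    (Φ : ℝ → E → E)
    (hΦ0 : ∀ z, Φ 0 z = z)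
    (hΦgrp : ∀ t s z, Φ (t + s) z = Φ t (Φ s z))
    (hΦder : ∀ t z, HasDerivAt (fun τ => Φ τ z) (X (Φ t z)) t)
    (H₁ : E → Matrix (Fin 2) (Fin 2) ℂ)
    (hH₁cont : Continuous H₁)
    (hH₁herm : ∀ z, (H₁ z)ᴴ = H₁ z)
    (d : E → ℝ → Matrix (Fin 2) (Fin 2) ℂ)
    (hd0 : ∀ z, d z 0 = 1)
    (hdder : ∀ z t, HasDerivAt (d z) ((-Complex.I) • (H₁ (Φ t z) * d z t)) t)
    (hcocycle : ∀ z t s, d z (t + s) = d (Φ t z) s * d z t)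
    (B₀ : E → Matrix (Fin 2) (Fin 2) ℂ) (hB₀ : ContDiff ℝ 1 B₀)
    (B : ℝ → E → Matrix (Fin 2) (Fin 2) ℂ)
    (hB : ∀ t z, B t z = (d z t)ᴴ * B₀ (Φ t z) * d z t)
    (hBdiff : ∀ t, Differentiable ℝ (B t)) :
    ∀ t z, HasDerivAt (fun τ => B τ z)
      (fderiv ℝ (B t) z (X z) + Complex.I • (H₁ z * B t z - B t z * H₁ z)) t :=
  egorov_transport_equation_general X Φ hΦ0 hΦgrp hΦder H₁ hH₁herm d hd0 hdder hcocycle B₀ B hB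
    hBdiff
end

section
/- Let H : ℝ → M_n(ℂ) be continuous. For each t₀ ∈ ℝ let d_{t₀} : ℝ → M_n(ℂ) be a differentiable map with d_{t₀}(0) = 1 and d_{t₀}'(s) = -i·H(t₀+s)·d_{t₀}(s) for all s. Then for every t ∈ ℝ the matrix d₀(t) is invertible, and its inverse is d_t(−t), i.e. d_t(−t)·d₀(t) = 1 = d₀(t)·d_t(−t). -/
/-!
For fixed `t`, both `s ↦ d t s * d 0 t` and `s ↦ d 0 (t + s)` solve the linear equation
`Y' = -i • H (t + s) * Y` and take the value `d 0 t` at `s = 0`. Continuity of `H` makes the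
right-hand side locally Lipschitz in `Y`, so the two solutions coincide; at `s = -t` this reads
`d t (-t) * d 0 t = d 0 0 = 1`. A one-sided inverse of a square matrix is two-sided.
-/

attribute [local instance] Matrix.normedAddCommGroup Matrix.normedSpace

open Set Filter Topology in
theorem linear_ODE_solution_unique {E : Type*} [NormedAddCommGroup E] [NormedSpace ℝ E]
    {B : ℝ → E →L[ℝ] E} (hB : Continuous B) {f g : ℝ → E} {t₀ : ℝ}
    (hf : ∀ t, HasDerivAt f (B t (f t)) t) (hg : ∀ t, HasDerivAt g (B t (g t)) t)
    (heq : f t₀ = g t₀) : f = g := by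
  have hfc : Continuous f := continuous_iff_continuousAt.2 fun t ↦ (hf t).continuousAt
  have hgc : Continuous g := continuous_iff_continuousAt.2 fun t ↦ (hg t).continuousAt
  have hopen : IsOpen {t | f t = g t} := isOpen_iff_mem_nhds.2 fun t ht ↦ by
    have hlip : ∀ᶠ s in 𝓝 t, LipschitzOnWith (‖B t‖₊ + 1) (B s) univ :=
      (hB.nnnorm.continuousAt.eventually (gt_mem_nhds (lt_add_one _))).mono
        fun s hs ↦ ((B s).lipschitz.weaken hs.le).lipschitzOnWith
    exact ODE_solution_unique_of_eventually hlip (.of_forall fun s ↦ ⟨hf s, trivial⟩)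
      (.of_forall fun s ↦ ⟨hg s, trivial⟩) ht
  have huniv := IsClopen.eq_univ ⟨isClosed_eq hfc hgc, hopen⟩ ⟨t₀, heq⟩
  exact funext (eq_univ_iff_forall.1 huniv)

theorem LinearMap.continuous_toContinuousLinearMap_comp {𝕜 X E F : Type*}
    [NontriviallyNormedField 𝕜] [CompleteSpace 𝕜] [TopologicalSpace X]
    [NormedAddCommGroup E] [NormedSpace 𝕜 E] [FiniteDimensional 𝕜 E]
    [NormedAddCommGroup F] [NormedSpace 𝕜 F] [FiniteDimensional 𝕜 F]
    (M : F →ₗ[𝕜] E →ₗ[𝕜] E) {a : X → F} (ha : Continuous a) :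
    Continuous fun x ↦ LinearMap.toContinuousLinearMap (M (a x)) :=
  (LinearMap.toContinuousLinearMap.toLinearMap ∘ₗ M).continuous_of_finiteDimensional.comp ha

theorem Matrix.hasDerivAt_mul_const {m 𝕜 : Type*} [Fintype m] [RCLike 𝕜] {Y : ℝ → Matrix m m 𝕜}
    {Y' : Matrix m m 𝕜} {s : ℝ} (hY : HasDerivAt Y Y' s) (C : Matrix m m 𝕜) :
    HasDerivAt (fun s ↦ Y s * C) (Y' * C) s :=
  (LinearMap.mulRight ℝ C).toContinuousLinearMap.hasFDerivAt.comp_hasDerivAt s hY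

theorem spin_transport_cocycle {m : Type*} [Fintype m] [DecidableEq m] {H : ℝ → Matrix m m ℂ}
    (hH : Continuous H) {d : ℝ → ℝ → Matrix m m ℂ} (hd0 : ∀ t₀, d t₀ 0 = 1)
    (hd : ∀ t₀ s, HasDerivAt (d t₀) ((-Complex.I) • (H (t₀ + s) * d t₀ s)) s) (t₀ t₁ s : ℝ) :
    d (t₀ + t₁) s * d t₀ t₁ = d t₀ (t₁ + s) := by
  have hB := (LinearMap.mul ℝ (Matrix m m ℂ)).continuous_toContinuousLinearMap_comp
    (a := fun s ↦ (-Complex.I) • H (t₀ + t₁ + s)) (by fun_prop)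
  refine congrFun (linear_ODE_solution_unique hB (f := fun s ↦ d (t₀ + t₁) s * d t₀ t₁)
    (g := fun s ↦ d t₀ (t₁ + s)) (t₀ := 0) (fun s ↦ ?_) (fun s ↦ ?_) ?_) s
  -- `hd` is stated for the product topology on matrices, the goals for the normed one: they
  -- agree only up to unfolding, so the goals are closed by `exact`, not `simpa`.
  · have h := Matrix.hasDerivAt_mul_const (hd (t₀ + t₁) s) (d t₀ t₁)
    rw [smul_mul_assoc, mul_assoc] at h
    simp only [LinearMap.coe_toContinuousLinearMap', LinearMap.mul_apply', smul_mul_assoc]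
    exact h
  · simp only [LinearMap.coe_toContinuousLinearMap', LinearMap.mul_apply', smul_mul_assoc,
      add_assoc]
    exact (hd t₀ (t₁ + s)).comp_const_add t₁ s
  · simp [hd0]

/-- **Invertibility of the spin transport matrix.**
Let `H : ℝ → Mₙ(ℂ)` be continuous and, for each `t₀`, let `d t₀ : ℝ → Mₙ(ℂ)` solve the
spin transport equation started at time `t₀`, i.e. `d t₀ 0 = 1` and
`(d t₀)' s = -i • (H (t₀ + s) * d t₀ s)`.  Then `d 0 t` is invertible with inverse
`d t (-t)`. -/
theorem spin_transport_invertible {n : ℕ}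
    (H : ℝ → Matrix (Fin n) (Fin n) ℂ)
    (hHcont : Continuous H)
    (d : ℝ → ℝ → Matrix (Fin n) (Fin n) ℂ)
    (hd0 : ∀ t₀ : ℝ, d t₀ 0 = 1)
    (hd : ∀ t₀ s : ℝ, HasDerivAt (d t₀) ((-Complex.I) • (H (t₀ + s) * d t₀ s)) s) :
    ∀ t : ℝ, IsUnit (d 0 t) ∧ d t (-t) * d 0 t = 1 ∧ d 0 t * d t (-t) = 1 := by
  intro t
  have hleft : d t (-t) * d 0 t = 1 := by
    simpa [hd0] using spin_transport_cocycle hHcont hd0 hd 0 t (-t)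
  have hright : d 0 t * d t (-t) = 1 := mul_eq_one_comm.mp hleft
  exact ⟨⟨⟨d 0 t, d t (-t), hright, hleft⟩, rfl⟩, hleft, hright⟩
end
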